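/- arXiv:1512.05908 — 6 statements merged into one kernel-verified Lean document; each statement's English description precedes it below -/
import Mathlib

section
/- Let q = (2e+1)·t with integers e ≥ 0 and t ≥ 2, and set d1 = gcd(2e+1, t). The assignment k ↦ LC_q(e,k) maps the integers onto the set of all additive subgroups of Z_q^2 that are perfect e-codes of type 2, and LC_q(e,k1) = LC_q(e,k2) if and only if k1 ≡ k2 (mod d1). In particular, the number of additive subgroups of Z_q^2 that are perfect e-codes of type 2 is exactly d1. -/
/-- Lee distance on `ZMod q`. -/
def leeDist {q : ℕ} (x y : ZMod q) : ℕ := min (x - y).val (q - (x - y).val)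

/-- Maximum (Chebyshev) distance on `(ZMod q)^n`. -/
def maxDist {q n : ℕ} (x y : Fin n → ZMod q) : ℕ :=
  Finset.univ.sup fun i => leeDist (x i) (y i)

/-- `C` is a perfect `e`-code: every point is within distance `e` of exactly one codeword. -/
def IsPerfectCode {q n : ℕ} (e : ℕ) (C : Set (Fin n → ZMod q)) : Prop :=
  ∀ x : Fin n → ZMod q, ∃! c, c ∈ C ∧ maxDist x c ≤ e

/-- `C ⊆ (ZMod q)^n` is a code of type `i`: translation by `(2e+1)·e_i` preserves `C`. -/
def IsTypeCode {q n : ℕ} (e : ℕ) (C : Set (Fin n → ZMod q)) (i : Fin n) : Prop :=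
  ∀ c ∈ C, c + Pi.single i ((2 * e + 1 : ℕ) : ZMod q) ∈ C

/-- `LC_q(e,k)`: the additive subgroup of `(ZMod q)^2` generated by
`(2e+1, k·h1)` and `(0, 2e+1)`, where `h1 = (2e+1)/gcd(2e+1,t)`. -/
def LCcode (q e t : ℕ) (k : ℤ) : AddSubgroup (Fin 2 → ZMod q) :=
  AddSubgroup.closure
    { ![((2 * e + 1 : ℕ) : ZMod q),
        ((k * (((2 * e + 1) / Nat.gcd (2 * e + 1) t : ℕ) : ℤ) : ℤ) : ZMod q)],
      ![(0 : ZMod q), ((2 * e + 1 : ℕ) : ZMod q)] }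

/-! The Lee distance `leeDist x y` is the least `|n|` over integer lifts `n` of `x - y`, so a
subgroup of `(ZMod q)^n` is a perfect `e`-code iff it covers with radius `e` and has no nonzero
word of maximum norm `≤ 2e`. Write `m = 2e+1`. For the lattice generated by `(m, s)` and
`(0, m)`, covering is balanced division by `m`, and packing reduces to `m ∣ t·s`: a word whose
first coordinate `a·m` vanishes mod `q = m·t` has `t ∣ a`. Since `m ∣ t·s ↔ h1 ∣ s`, these
lattices are exactly the `LC_q(e,k)`, and two of them agree iff `m ∣ (k1 - k2)·h1`, i.e.
`d1 ∣ k1 - k2`.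

Conversely, a perfect type-2 subgroup `C` contains the column `{0} × mℤ`, and every codeword
whose first coordinate has Lee norm `≤ 2e` lies in that column. As `t ≥ 2`, the codeword nearest
`(e+1, 0)` is not in the column, so its first coordinate is `m`; multiplying it by `t` shows that
its second coordinate `s` satisfies `m ∣ t·s`. The lattice of slope `s` is then a perfect code
inside `C`, hence equal to it.
-/

section LeeDistance

variable {q : ℕ}

lemma leeDist_congr {x y x' y' : ZMod q} (h : x - y = x' - y') :
    leeDist x y = leeDist x' y' := by
  rw [leeDist, h, leeDist]

lemma leeDist_self (x : ZMod q) : leeDist x x = 0 := by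
  simp [leeDist]

lemma leeDist_natCast_le (n : ℕ) : leeDist (n : ZMod q) 0 ≤ n := by
  simp only [leeDist, sub_zero, ZMod.val_natCast]
  exact (min_le_left _ _).trans (Nat.mod_le n q)

variable [NeZero q]

lemma leeDist_comm (x y : ZMod q) : leeDist x y = leeDist y x := by
  by_cases h : x - y = 0
  · rw [sub_eq_zero.mp h]
  · have hneg : y - x = -(x - y) := (neg_sub x y).symm
    have hlt := ZMod.val_lt (x - y)
    rw [leeDist, leeDist, hneg, ZMod.neg_val, if_neg h]
    omega

lemma leeDist_intCast_le (n : ℤ) : leeDist (n : ZMod q) 0 ≤ n.natAbs := by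
  obtain ⟨k, rfl | rfl⟩ := Int.eq_nat_or_neg n
  · simpa using leeDist_natCast_le k
  · rw [Int.cast_neg, Int.cast_natCast, leeDist_congr (x' := 0) (y' := (k : ZMod q)) (by ring),
      leeDist_comm, Int.natAbs_neg, Int.natAbs_natCast]
    exact leeDist_natCast_le k

lemma leeDist_le_iff {x y : ZMod q} {r : ℕ} :
    leeDist x y ≤ r ↔ ∃ n : ℤ, |n| ≤ r ∧ x - y = n := by
  constructor
  · intro h
    have hlt := ZMod.val_lt (x - y)
    rcases min_le_iff.mp h with hv | hv
    · exact ⟨(x - y).val, by rw [abs_of_nonneg (by positivity)]; exact_mod_cast hv, by simp⟩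
    · refine ⟨(x - y).val - q, ?_, by simp⟩
      rw [abs_of_nonpos (by omega)]
      omega
  · rintro ⟨n, hn, hxy⟩
    rw [leeDist_congr (x' := (n : ZMod q)) (y' := 0) (by rw [hxy, sub_zero])]
    refine (leeDist_intCast_le n).trans ?_
    rw [← Int.natCast_natAbs] at hn
    exact_mod_cast hn

lemma leeDist_triangle (x y z : ZMod q) : leeDist x z ≤ leeDist x y + leeDist y z := by
  obtain ⟨n₁, hn₁, h₁⟩ := leeDist_le_iff.mp (le_refl (leeDist x y))
  obtain ⟨n₂, hn₂, h₂⟩ := leeDist_le_iff.mp (le_refl (leeDist y z))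
  refine leeDist_le_iff.mpr ⟨n₁ + n₂, ?_, ?_⟩
  · push_cast
    exact (abs_add_le n₁ n₂).trans (add_le_add hn₁ hn₂)
  · rw [Int.cast_add, ← h₁, ← h₂]
    ring

lemma exists_leeDist_le_and_leeDist_le {x y : ZMod q} {a b : ℕ} (h : leeDist x y ≤ a + b) :
    ∃ z, leeDist x z ≤ a ∧ leeDist z y ≤ b := by
  obtain ⟨n, hn, hxy⟩ := leeDist_le_iff.mp h
  obtain ⟨n₁, hn₁, hn₂⟩ : ∃ n₁ : ℤ, |n₁| ≤ a ∧ |n - n₁| ≤ b := by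
    refine ⟨max (-a) (min a n), ?_, ?_⟩ <;> rw [abs_le] at * <;> push_cast at hn ⊢ <;>
      constructor <;> omega
  refine ⟨x - n₁, leeDist_le_iff.mpr ⟨n₁, hn₁, by ring⟩,
    leeDist_le_iff.mpr ⟨n - n₁, hn₂, ?_⟩⟩
  rw [Int.cast_sub, ← hxy]
  ring

lemma exists_leeDist_intCast_mul_le (e : ℕ) (x : ZMod q) :
    ∃ a : ℤ, leeDist x ((a * (2 * e + 1 : ℕ) : ℤ) : ZMod q) ≤ e := by
  set n : ℤ := (x.val : ℤ)
  refine ⟨(n + e) / (2 * e + 1), leeDist_le_iff.mpr ⟨(n + e) % (2 * e + 1) - e, ?_, ?_⟩⟩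
  · have h₀ := Int.emod_nonneg (n + e) (by omega : (2 * e + 1 : ℤ) ≠ 0)
    have h₁ := Int.emod_lt_of_pos (n + e) (by omega : (0 : ℤ) < 2 * e + 1)
    rw [abs_le]
    constructor <;> omega
  · have hx : x = (n : ZMod q) := by simp [n]
    have hdiv := Int.emod_add_mul_ediv (n + e) (2 * e + 1)
    rw [hx, ← Int.cast_sub]
    congr 1
    push_cast
    linarith

end LeeDistance

section MaxDist

variable {q n : ℕ}

lemma maxDist_le_iff {x y : Fin n → ZMod q} {r : ℕ} :
    maxDist x y ≤ r ↔ ∀ i, leeDist (x i) (y i) ≤ r := by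
  simp [maxDist, Finset.sup_le_iff]

lemma maxDist_self (x : Fin n → ZMod q) : maxDist x x = 0 := by
  simp [maxDist, leeDist_self]

lemma maxDist_sub_zero (x y : Fin n → ZMod q) : maxDist (x - y) 0 = maxDist x y := by
  simp only [maxDist, Pi.sub_apply, Pi.zero_apply]
  congr 1
  ext i
  exact leeDist_congr (sub_zero _)

lemma maxDist_fin_two_le_iff {x y : Fin 2 → ZMod q} {r : ℕ} :
    maxDist x y ≤ r ↔ leeDist (x 0) (y 0) ≤ r ∧ leeDist (x 1) (y 1) ≤ r := by
  rw [maxDist_le_iff, Fin.forall_fin_two]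

variable [NeZero q]

lemma maxDist_comm (x y : Fin n → ZMod q) : maxDist x y = maxDist y x := by
  simp only [maxDist, leeDist_comm (x _)]

lemma maxDist_triangle (x y z : Fin n → ZMod q) : maxDist x z ≤ maxDist x y + maxDist y z :=
  maxDist_le_iff.mpr fun i => (leeDist_triangle _ (y i) _).trans <|
    add_le_add (maxDist_le_iff.mp le_rfl i) (maxDist_le_iff.mp le_rfl i)

end MaxDist

section PerfectCode

variable {q n e : ℕ}

lemma isPerfectCode_iff [NeZero q] {C : Set (Fin n → ZMod q)} :
    IsPerfectCode e C ↔
      (∀ x, ∃ c ∈ C, maxDist x c ≤ e) ∧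
        ∀ c ∈ C, ∀ c' ∈ C, maxDist c c' ≤ 2 * e → c = c' := by
  constructor
  · intro hC
    refine ⟨fun x => (hC x).exists, fun c hc c' hc' hcc' => ?_⟩
    -- a coordinatewise midpoint of `c` and `c'` is within `e` of both
    have hsplit : ∀ i, ∃ z, leeDist (c i) z ≤ e ∧ leeDist z (c' i) ≤ e := fun i =>
      exists_leeDist_le_and_leeDist_le ((maxDist_le_iff.mp hcc' i).trans (two_mul e).le)
    choose x hxc hxc' using hsplit
    refine (hC x).unique ⟨hc, maxDist_le_iff.mpr fun i => ?_⟩ ⟨hc', maxDist_le_iff.mpr hxc'⟩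
    rw [leeDist_comm]
    exact hxc i
  · rintro ⟨hcover, hpack⟩ x
    obtain ⟨c, hc, hxc⟩ := hcover x
    refine ⟨c, ⟨hc, hxc⟩, fun c' ⟨hc', hxc'⟩ => hpack c' hc' c hc ?_⟩
    calc maxDist c' c ≤ maxDist c' x + maxDist x c := maxDist_triangle _ _ _
      _ ≤ 2 * e := by rw [maxDist_comm c']; omega

lemma IsPerfectCode.eq_of_subset {C₁ C₂ : Set (Fin n → ZMod q)} (h₁ : IsPerfectCode e C₁)
    (h₂ : IsPerfectCode e C₂) (h : C₁ ⊆ C₂) : C₁ = C₂ := by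
  refine h.antisymm fun y hy => ?_
  obtain ⟨z, ⟨hz, hyz⟩, -⟩ := h₁ y
  obtain rfl : y = z :=
    (h₂ y).unique ⟨hy, by rw [maxDist_self]; exact Nat.zero_le e⟩ ⟨h hz, hyz⟩
  exact hz

lemma isPerfectCode_addSubgroup_iff [NeZero q] {C : AddSubgroup (Fin n → ZMod q)} :
    IsPerfectCode e (C : Set (Fin n → ZMod q)) ↔
      (∀ x, ∃ c ∈ C, maxDist x c ≤ e) ∧ ∀ c ∈ C, maxDist c 0 ≤ 2 * e → c = 0 := by
  rw [isPerfectCode_iff]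
  refine and_congr Iff.rfl
    ⟨fun h c hc hc0 => h c hc 0 C.zero_mem hc0, fun h c hc c' hc' hcc' => ?_⟩
  rw [← maxDist_sub_zero] at hcc'
  exact sub_eq_zero.mp (h _ (C.sub_mem hc hc') hcc')

end PerfectCode

section Multiples

variable {q m t : ℕ}

lemma intCast_mul_eq_zero_iff (hq : q = m * t) (hm : m ≠ 0) {a : ℤ} :
    ((a * m : ℤ) : ZMod q) = 0 ↔ (t : ℤ) ∣ a := by
  rw [ZMod.intCast_zmod_eq_zero_iff_dvd, hq, Nat.cast_mul, mul_comm a,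
    mul_dvd_mul_iff_left (by exact_mod_cast hm)]

lemma dvd_of_intCast_eq_intCast_mul (hm : m ∣ q) {n b : ℤ}
    (h : (n : ZMod q) = ((b * m : ℤ) : ZMod q)) : (m : ℤ) ∣ n := by
  have hdvd : (m : ℤ) ∣ b * m - n :=
    (Int.natCast_dvd_natCast.mpr hm).trans ((ZMod.intCast_eq_intCast_iff_dvd_sub _ _ _).mp h)
  simpa using (dvd_mul_left (m : ℤ) b).sub hdvd

lemma intCast_mul_eq_zero_of_leeDist_lt [NeZero q] (hm : m ∣ q) {a : ℤ}
    (h : leeDist ((a * m : ℤ) : ZMod q) 0 < m) : ((a * m : ℤ) : ZMod q) = 0 := by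
  obtain ⟨n, hn, han⟩ := leeDist_le_iff.mp (le_refl (leeDist ((a * m : ℤ) : ZMod q) 0))
  rw [sub_zero] at han
  have hn0 : n = 0 :=
    Int.eq_zero_of_abs_lt_dvd (dvd_of_intCast_eq_intCast_mul hm han.symm) (by omega)
  rw [han, hn0, Int.cast_zero]

end Multiples

lemma pi_single_one_fin_two {M : Type*} [Zero M] (a : M) :
    (Pi.single 1 a : Fin 2 → M) = ![0, a] := by
  ext i
  fin_cases i <;> rfl

def slopeCode (q m : ℕ) (s : ℤ) : AddSubgroup (Fin 2 → ZMod q) :=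
  AddSubgroup.closure {![(m : ZMod q), (s : ZMod q)], ![0, (m : ZMod q)]}

section SlopeCode

variable {q m t : ℕ}

lemma mem_slopeCode {s : ℤ} {x : Fin 2 → ZMod q} :
    x ∈ slopeCode q m s ↔
      ∃ a b : ℤ, x = ![((a * m : ℤ) : ZMod q), ((a * s + b * m : ℤ) : ZMod q)] := by
  rw [slopeCode, AddSubgroup.mem_closure_pair]
  refine exists₂_congr fun a b => ?_
  have hcomb : a • ![(m : ZMod q), (s : ZMod q)] + b • ![0, (m : ZMod q)] =
      ![((a * m : ℤ) : ZMod q), ((a * s + b * m : ℤ) : ZMod q)] := by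
    ext i
    fin_cases i <;> simp
  rw [hcomb, eq_comm]

lemma isTypeCode_slopeCode (e : ℕ) (s : ℤ) :
    IsTypeCode e (slopeCode q (2 * e + 1) s : Set (Fin 2 → ZMod q)) 1 := by
  intro c hc
  rw [pi_single_one_fin_two]
  exact (slopeCode q (2 * e + 1) s).add_mem hc (AddSubgroup.subset_closure (by simp))

lemma slopeCode_le_of_dvd {s₁ s₂ : ℤ} (h : (m : ℤ) ∣ s₁ - s₂) :
    slopeCode q m s₁ ≤ slopeCode q m s₂ := by
  obtain ⟨j, hj⟩ := h
  rw [slopeCode, AddSubgroup.closure_le, Set.insert_subset_iff, Set.singleton_subset_iff]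
  refine ⟨mem_slopeCode.mpr ⟨1, j, ?_⟩, mem_slopeCode.mpr ⟨0, 1, ?_⟩⟩
  · rw [show s₁ = s₂ + m * j by linarith]
    ext i
    fin_cases i <;> simp [mul_comm]
  · ext i
    fin_cases i <;> simp

lemma exists_eq_mul_of_mem_slopeCode (hq : q = m * t) (hm : m ≠ 0) {s : ℤ}
    (hs : (m : ℤ) ∣ t * s) {x : Fin 2 → ZMod q} (hx : x ∈ slopeCode q m s) (h0 : x 0 = 0) :
    ∃ b : ℤ, x 1 = ((b * m : ℤ) : ZMod q) := by
  obtain ⟨a, b, rfl⟩ := mem_slopeCode.mp hx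
  obtain ⟨a', rfl⟩ := (intCast_mul_eq_zero_iff hq hm).mp h0
  obtain ⟨j, hj⟩ := hs
  refine ⟨a' * j + b, ?_⟩
  simp only [Matrix.cons_val_one, Matrix.cons_val_zero]
  congr 1
  linear_combination a' * hj

lemma slopeCode_eq_iff (hq : q = m * t) (hm : m ≠ 0) {s₁ s₂ : ℤ}
    (hs : (m : ℤ) ∣ t * s₂) :
    slopeCode q m s₁ = slopeCode q m s₂ ↔ (m : ℤ) ∣ s₁ - s₂ := by
  refine ⟨fun h => ?_, fun h => le_antisymm (slopeCode_le_of_dvd h)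
    (slopeCode_le_of_dvd (dvd_sub_comm.mp h))⟩
  have hgen : ∀ s, ![(m : ZMod q), (s : ZMod q)] ∈ slopeCode q m s := fun s =>
    AddSubgroup.subset_closure (by simp)
  have hdiff := (slopeCode q m s₂).sub_mem (h ▸ hgen s₁) (hgen s₂)
  obtain ⟨b, hb⟩ := exists_eq_mul_of_mem_slopeCode hq hm hs hdiff (by simp)
  refine dvd_of_intCast_eq_intCast_mul (Dvd.intro t hq.symm) (b := b) ?_
  simpa using hb

lemma isPerfectCode_slopeCode {e : ℕ} (hq : q = (2 * e + 1) * t) (ht : t ≠ 0) {s : ℤ}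
    (hs : ((2 * e + 1 : ℕ) : ℤ) ∣ t * s) :
    IsPerfectCode e (slopeCode q (2 * e + 1) s : Set (Fin 2 → ZMod q)) := by
  have : NeZero q := ⟨by rw [hq]; positivity⟩
  rw [isPerfectCode_addSubgroup_iff]
  constructor
  · intro x
    obtain ⟨a, ha⟩ := exists_leeDist_intCast_mul_le e (x 0)
    obtain ⟨b, hb⟩ := exists_leeDist_intCast_mul_le e (x 1 - ((a * s : ℤ) : ZMod q))
    refine ⟨_, mem_slopeCode.mpr ⟨a, b, rfl⟩, maxDist_fin_two_le_iff.mpr ⟨ha, ?_⟩⟩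
    simp only [Matrix.cons_val_one, Matrix.cons_val_zero]
    rwa [leeDist_congr (x' := x 1 - ((a * s : ℤ) : ZMod q))
      (y' := ((b * (2 * e + 1 : ℕ) : ℤ) : ZMod q)) (by push_cast; ring)]
  · intro c hc hc0
    have hm : 2 * e + 1 ∣ q := Dvd.intro t hq.symm
    have hsmall : ∀ i, leeDist (c i) 0 < 2 * e + 1 := fun i =>
      Nat.lt_succ_of_le (maxDist_le_iff.mp hc0 i)
    obtain ⟨a, b, hab⟩ := mem_slopeCode.mp hc
    have hc₀ : c 0 = 0 := by
      have h0 := hsmall 0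
      rw [hab] at h0 ⊢
      exact intCast_mul_eq_zero_of_leeDist_lt hm h0
    obtain ⟨b', hb'⟩ := exists_eq_mul_of_mem_slopeCode hq (by omega) hs hc hc₀
    have hc₁ : c 1 = 0 := by
      have h1 := hsmall 1
      rw [hb'] at h1 ⊢
      exact intCast_mul_eq_zero_of_leeDist_lt hm h1
    ext i
    fin_cases i
    exacts [hc₀, hc₁]

end SlopeCode

section Classification

variable {q e t : ℕ} {C : AddSubgroup (Fin 2 → ZMod q)}

lemma IsTypeCode.vec_zero_mul_mem (hT : IsTypeCode e (C : Set (Fin 2 → ZMod q)) 1) (b : ℤ) :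
    ![0, ((b * (2 * e + 1 : ℕ) : ℤ) : ZMod q)] ∈ C := by
  have hsingle := hT 0 C.zero_mem
  rw [SetLike.mem_coe, zero_add, pi_single_one_fin_two] at hsingle
  convert C.zsmul_mem hsingle b using 1
  ext i
  fin_cases i
  · simp
  · simp
    ring

lemma IsPerfectCode.exists_eq_vec_zero_mul [NeZero q]
    (hP : IsPerfectCode e (C : Set (Fin 2 → ZMod q)))
    (hT : IsTypeCode e (C : Set (Fin 2 → ZMod q)) 1) {c : Fin 2 → ZMod q} (hc : c ∈ C)
    (h0 : leeDist (c 0) 0 ≤ 2 * e) :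
    ∃ b : ℤ, c = ![0, ((b * (2 * e + 1 : ℕ) : ℤ) : ZMod q)] := by
  obtain ⟨b, hb⟩ := exists_leeDist_intCast_mul_le e (c 1)
  refine ⟨b, (isPerfectCode_iff.mp hP).2 c hc _ (hT.vec_zero_mul_mem b) ?_⟩
  exact maxDist_fin_two_le_iff.mpr ⟨by simpa using h0, by simpa using hb.trans (by omega)⟩

lemma eq_of_leeDist_succ_le [NeZero q] {z : ZMod q} (h : leeDist ((e + 1 : ℕ) : ZMod q) z ≤ e)
    (hz : 2 * e < leeDist z 0) : z = ((2 * e + 1 : ℕ) : ZMod q) := by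
  obtain ⟨n, hn, hzn⟩ := leeDist_le_iff.mp h
  have hz' : z = ((e + 1 - n : ℤ) : ZMod q) := by
    rw [Int.cast_sub, ← hzn]
    push_cast
    ring
  have hle := leeDist_intCast_le (q := q) (e + 1 - n)
  rw [← hz'] at hle
  rw [abs_le] at hn
  obtain rfl : n = -e := by omega
  rw [hz']
  push_cast
  ring

lemma IsPerfectCode.exists_mem_apply_zero_eq (ht : 2 ≤ t) (hq : q = (2 * e + 1) * t)
    (hP : IsPerfectCode e (C : Set (Fin 2 → ZMod q)))
    (hT : IsTypeCode e (C : Set (Fin 2 → ZMod q)) 1) :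
    ∃ c ∈ C, c 0 = ((2 * e + 1 : ℕ) : ZMod q) := by
  have : NeZero q := ⟨by rw [hq]; positivity⟩
  obtain ⟨c, ⟨hc, hxc⟩, -⟩ := hP ![((e + 1 : ℕ) : ZMod q), 0]
  have hc₀ : leeDist ((e + 1 : ℕ) : ZMod q) (c 0) ≤ e := by
    simpa using maxDist_le_iff.mp hxc 0
  refine ⟨c, hc, eq_of_leeDist_succ_le hc₀ (not_le.mp fun hle => ?_)⟩
  obtain ⟨b, rfl⟩ := hP.exists_eq_vec_zero_mul hT hc hle
  have hq' : 4 * e + 2 ≤ q := by rw [hq]; nlinarith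
  simp only [Matrix.cons_val_zero, leeDist, sub_zero,
    ZMod.val_natCast_of_lt (by omega : e + 1 < q)] at hc₀
  omega

lemma IsPerfectCode.exists_eq_slopeCode (ht : 2 ≤ t) (hq : q = (2 * e + 1) * t)
    (hP : IsPerfectCode e (C : Set (Fin 2 → ZMod q)))
    (hT : IsTypeCode e (C : Set (Fin 2 → ZMod q)) 1) :
    ∃ s : ℤ, ((2 * e + 1 : ℕ) : ℤ) ∣ t * s ∧ C = slopeCode q (2 * e + 1) s := by
  have : NeZero q := ⟨by rw [hq]; positivity⟩
  obtain ⟨c, hc, hc₀⟩ := hP.exists_mem_apply_zero_eq ht hq hT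
  set s : ℤ := ((c 1).val : ℤ)
  have hc₁ : c 1 = (s : ZMod q) := by simp [s]
  have htc₀ : ((t : ℤ) • c) 0 = 0 := by
    rw [Pi.smul_apply, hc₀, natCast_zsmul, nsmul_eq_mul, ← Nat.cast_mul, mul_comm, ← hq,
      ZMod.natCast_self]
  obtain ⟨b, hb⟩ := hP.exists_eq_vec_zero_mul hT (C.zsmul_mem hc t) (by simp [htc₀, leeDist])
  have hdvd : ((2 * e + 1 : ℕ) : ℤ) ∣ t * s := by
    refine dvd_of_intCast_eq_intCast_mul (Dvd.intro t hq.symm) (b := b) ?_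
    simpa [hc₁] using congrFun hb 1
  refine ⟨s, hdvd, SetLike.coe_injective
    ((isPerfectCode_slopeCode hq (by omega) hdvd).eq_of_subset hP ?_).symm⟩
  rw [slopeCode, SetLike.coe_subset_coe, AddSubgroup.closure_le, Set.insert_subset_iff,
    Set.singleton_subset_iff]
  refine ⟨?_, by simpa using hT.vec_zero_mul_mem 1⟩
  rw [SetLike.mem_coe]
  convert hc using 1
  ext i
  fin_cases i
  exacts [hc₀.symm, hc₁.symm]

end Classification

lemma intCast_dvd_mul_iff_div_gcd_dvd {m t : ℕ} (hm : 0 < m) {s : ℤ} :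
    (m : ℤ) ∣ t * s ↔ ((m / Nat.gcd m t : ℕ) : ℤ) ∣ s := by
  have hd : 0 < Nat.gcd m t := Nat.gcd_pos_of_pos_left t hm
  have hm' : (m : ℤ) = Nat.gcd m t * (m / Nat.gcd m t : ℕ) := by
    exact_mod_cast (Nat.mul_div_cancel' (Nat.gcd_dvd_left m t)).symm
  have ht' : (t : ℤ) = Nat.gcd m t * (t / Nat.gcd m t : ℕ) := by
    exact_mod_cast (Nat.mul_div_cancel' (Nat.gcd_dvd_right m t)).symm
  rw [hm', ht', mul_assoc, mul_dvd_mul_iff_left (by exact_mod_cast hd.ne')]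
  exact ⟨(Nat.isCoprime_iff_coprime.mpr (Nat.coprime_div_gcd_div_gcd hd)).dvd_of_dvd_mul_left,
    fun h => h.mul_left _⟩

lemma dvd_mul_mul_div_gcd {m : ℕ} (t : ℕ) (hm : 0 < m) (k : ℤ) :
    (m : ℤ) ∣ t * (k * (m / Nat.gcd m t : ℕ)) :=
  (intCast_dvd_mul_iff_div_gcd_dvd hm).mpr (dvd_mul_left _ k)

lemma ncard_range_of_modEq_iff {α : Type*} {n : ℕ} [NeZero n] {f : ℤ → α}
    (hf : ∀ a b, f a = f b ↔ a ≡ b [ZMOD n]) : (Set.range f).ncard = n := by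
  have hrange : Set.range f = Set.range fun z : ZMod n => f z.val := by
    refine (Set.range_comp_subset_range _ f).antisymm' ?_
    rintro _ ⟨a, rfl⟩
    refine ⟨a, (hf _ _).mpr ?_⟩
    show ((a : ZMod n).val : ℤ) ≡ a [ZMOD n]
    rw [ZMod.val_intCast]
    exact Int.mod_modEq a n
  rw [hrange, Set.ncard_range_of_injective, Nat.card_zmod]
  intro z₁ z₂ h
  simpa using (ZMod.intCast_eq_intCast_iff _ _ n).mpr ((hf _ _).mp h)

section LCcode

variable {q e t : ℕ}

lemma LCcode_eq_slopeCode (k : ℤ) :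
    LCcode q e t k = slopeCode q (2 * e + 1) (k * ((2 * e + 1) / Nat.gcd (2 * e + 1) t : ℕ)) :=
  rfl

lemma LCcode_eq_iff (hq : q = (2 * e + 1) * t) (k₁ k₂ : ℤ) :
    LCcode q e t k₁ = LCcode q e t k₂ ↔
      k₁ ≡ k₂ [ZMOD (Nat.gcd (2 * e + 1) t : ℤ)] := by
  have hh : 0 < (2 * e + 1) / Nat.gcd (2 * e + 1) t :=
    Nat.div_pos (Nat.gcd_le_left t (by omega)) (Nat.gcd_pos_of_pos_left t (by omega))
  have hm : ((2 * e + 1 : ℕ) : ℤ) =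
      Nat.gcd (2 * e + 1) t * ((2 * e + 1) / Nat.gcd (2 * e + 1) t : ℕ) := by
    exact_mod_cast (Nat.mul_div_cancel' (Nat.gcd_dvd_left (2 * e + 1) t)).symm
  rw [LCcode_eq_slopeCode, LCcode_eq_slopeCode,
    slopeCode_eq_iff hq (by omega) (dvd_mul_mul_div_gcd t (by omega) k₂), ← sub_mul, hm,
    mul_dvd_mul_iff_right (by exact_mod_cast hh.ne'), Int.modEq_iff_dvd, dvd_sub_comm]

lemma range_LCcode (ht : 2 ≤ t) (hq : q = (2 * e + 1) * t) :
    Set.range (LCcode q e t) =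
      {C : AddSubgroup (Fin 2 → ZMod q) |
        IsPerfectCode e (C : Set (Fin 2 → ZMod q)) ∧
        IsTypeCode e (C : Set (Fin 2 → ZMod q)) 1} := by
  ext C
  constructor
  · rintro ⟨k, rfl⟩
    exact ⟨isPerfectCode_slopeCode hq (by omega) (dvd_mul_mul_div_gcd t (by omega) k),
      isTypeCode_slopeCode e _⟩
  · rintro ⟨hP, hT⟩
    obtain ⟨s, hs, rfl⟩ := hP.exists_eq_slopeCode ht hq hT
    obtain ⟨k, rfl⟩ := (intCast_dvd_mul_iff_div_gcd_dvd (by omega)).mp hs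
    exact ⟨k, by rw [LCcode_eq_slopeCode, mul_comm k]⟩

end LCcode

/-- Parametrization of two-dimensional linear perfect codes of type 2 by `ZMod d1`:
`k ↦ LC_q(e,k)` is onto such codes, `LC_q(e,k1) = LC_q(e,k2) ↔ k1 ≡ k2 (mod d1)`,
and there are exactly `d1 = gcd(2e+1,t)` such codes. -/
theorem stmt9 (e t q : ℕ) (ht : 2 ≤ t) (hq : q = (2 * e + 1) * t) :
    (Set.range (fun k : ℤ => LCcode q e t k) =
      {C : AddSubgroup (Fin 2 → ZMod q) |
        IsPerfectCode e (C : Set (Fin 2 → ZMod q)) ∧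
        IsTypeCode e (C : Set (Fin 2 → ZMod q)) 1}) ∧
    (∀ k1 k2 : ℤ, LCcode q e t k1 = LCcode q e t k2 ↔
      k1 ≡ k2 [ZMOD (Nat.gcd (2 * e + 1) t : ℤ)]) ∧
    {C : AddSubgroup (Fin 2 → ZMod q) |
        IsPerfectCode e (C : Set (Fin 2 → ZMod q)) ∧
        IsTypeCode e (C : Set (Fin 2 → ZMod q)) 1}.ncard =
      Nat.gcd (2 * e + 1) t := by
  have : NeZero (Nat.gcd (2 * e + 1) t) := ⟨(Nat.gcd_pos_of_pos_left t (by omega)).ne'⟩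
  refine ⟨range_LCcode ht hq, LCcode_eq_iff hq, ?_⟩
  rw [← range_LCcode ht hq]
  exact ncard_range_of_modEq_iff (LCcode_eq_iff hq)
end

section
/- Let q = (2e+1)·t with integers e ≥ 0 and t ≥ 2, let n ≥ 1, let C be an additive subgroup of Z_q^n that is a perfect e-code, and let x ∈ Z_q^n be such that t·x ∈ C. Then the additive subgroup of Z_q^{n+1} generated by C × {0} together with the element (x, 2e+1 mod q) is a perfect e-code in Z_q^{n+1}. -/
/-!
Every codeword of the new code has the form `(c + k • x, k (2e+1))` with `c ∈ C`. The multiples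
of `2e+1` form a perfect `e`-code in `ℤ/q`, whose balls are the blocks of `2e+1` consecutive
residues, so the last coordinate `y` of a point `(z, y)` determines `k` modulo `t`. As `t • x ∈ C`,
the translate `C + k • x` depends only on `k` modulo `t`, and perfection of `C` in the first `n`
coordinates singles out the codeword.
-/

theorem leeDist_eq_natAbs_valMinAbs {q : ℕ} [NeZero q] (a b : ZMod q) :
    leeDist a b = (a - b).valMinAbs.natAbs :=
  (ZMod.valMinAbs_natAbs_eq_min _).symm

theorem leeDist_le_iff_s12 {q e : ℕ} (h : 2 * e < q) {a b : ZMod q} :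
    leeDist a b ≤ e ↔ ∃ d : ℤ, d.natAbs ≤ e ∧ a - b = d := by
  have : NeZero q := ⟨by omega⟩
  rw [leeDist_eq_natAbs_valMinAbs]
  constructor
  · exact fun hab => ⟨_, hab, (ZMod.coe_valMinAbs _).symm⟩
  · rintro ⟨d, hd, hab⟩
    rw [(ZMod.valMinAbs_spec _ d).2 ⟨hab, by constructor <;> omega⟩]
    exact hd

section MultiplesCode

variable {e t q : ℕ}

theorem exists_leeDist_zsmul_le (hq : q = (2 * e + 1) * t) (ht : 0 < t) (y : ZMod q) :
    ∃ k : ℤ, leeDist y (k • ((2 * e + 1 : ℕ) : ZMod q)) ≤ e := by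
  obtain ⟨k, r, hr, hr', hkr⟩ : ∃ k r : ℤ, 0 ≤ r ∧ r < 2 * e + 1 ∧
      y.valMinAbs - k * (2 * e + 1) = r - e :=
    ⟨(y.valMinAbs + e) / (2 * e + 1), (y.valMinAbs + e) % (2 * e + 1),
      Int.emod_nonneg _ (by omega), Int.emod_lt_of_pos _ (by omega),
      by linarith [Int.mul_ediv_add_emod (y.valMinAbs + e) (2 * e + 1)]⟩
  refine ⟨k, (leeDist_le_iff_s12 (by nlinarith)).2 ⟨r - e, by omega, ?_⟩⟩
  rw [← hkr, zsmul_eq_mul]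
  push_cast
  rfl

theorem dvd_sub_of_leeDist_zsmul_le (hq : q = (2 * e + 1) * t) (ht : 0 < t) {y : ZMod q}
    {k₁ k₂ : ℤ} (h₁ : leeDist y (k₁ • ((2 * e + 1 : ℕ) : ZMod q)) ≤ e)
    (h₂ : leeDist y (k₂ • ((2 * e + 1 : ℕ) : ZMod q)) ≤ e) : (t : ℤ) ∣ k₁ - k₂ := by
  have he : 2 * e < q := by nlinarith
  obtain ⟨d₁, hd₁, hy₁⟩ := (leeDist_le_iff_s12 he).1 h₁
  obtain ⟨d₂, hd₂, hy₂⟩ := (leeDist_le_iff_s12 he).1 h₂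
  have hdvd : ((2 * e + 1) * t : ℤ) ∣ (2 * e + 1) * (k₁ - k₂) - (d₂ - d₁) := by
    rw [show ((2 * e + 1) * t : ℤ) = (q : ℤ) by rw [hq]; push_cast; rfl,
      ← ZMod.intCast_zmod_eq_zero_iff_dvd]
    rw [zsmul_eq_mul] at hy₁ hy₂
    push_cast at hy₁ hy₂ ⊢
    linear_combination hy₂ - hy₁
  have hd : d₂ - d₁ = 0 :=
    Int.eq_zero_of_abs_lt_dvd
      ((dvd_sub_right (dvd_mul_right _ _)).1 ((dvd_mul_right _ _).trans hdvd))
      (abs_lt.2 ⟨by omega, by omega⟩)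
  rw [hd, sub_zero] at hdvd
  exact (mul_dvd_mul_iff_left (by positivity)).1 hdvd

theorem zsmul_eq_zsmul_of_dvd_sub (hq : q = (2 * e + 1) * t) {k₁ k₂ : ℤ}
    (h : (t : ℤ) ∣ k₁ - k₂) :
    k₁ • ((2 * e + 1 : ℕ) : ZMod q) = k₂ • ((2 * e + 1 : ℕ) : ZMod q) := by
  obtain ⟨s, hs⟩ := h
  have hq0 : (((2 * e + 1) * t : ℕ) : ZMod q) = 0 := by rw [← hq, ZMod.natCast_self]
  rw [← sub_eq_zero, zsmul_eq_mul, zsmul_eq_mul, ← sub_mul, ← Int.cast_sub, hs]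
  push_cast at hq0 ⊢
  linear_combination (s : ZMod q) * hq0

end MultiplesCode

section Snoc

variable {α : Type*} {n : ℕ}

theorem Fin.snoc_add_snoc [Add α] (a b : Fin n → α) (u v : α) :
    (Fin.snoc a u : Fin (n + 1) → α) + Fin.snoc b v = Fin.snoc (a + b) (u + v) := by
  ext i
  induction i using Fin.lastCases <;> simp

theorem Fin.smul_snoc {M : Type*} [SMul M α] (k : M) (a : Fin n → α) (u : α) :
    k • (Fin.snoc a u : Fin (n + 1) → α) = Fin.snoc (k • a) (k • u) := by
  ext i
  induction i using Fin.lastCases <;> simp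

variable (α n) in
def Fin.snocZeroHom [AddZeroClass α] : (Fin n → α) →+ (Fin (n + 1) → α) where
  toFun c := Fin.snoc c 0
  map_zero' := by
    ext i
    induction i using Fin.lastCases <;> simp
  map_add' a b := by rw [Fin.snoc_add_snoc, add_zero]

@[simp]
theorem Fin.coe_snocZeroHom [AddZeroClass α] :
    ⇑(Fin.snocZeroHom α n) = fun c : Fin n → α => Fin.snoc c (0 : α) :=
  rfl

end Snoc

theorem AddSubgroup.mem_closure_image_union_singleton {G H : Type*} [AddGroup G]
    [AddCommGroup H] (f : G →+ H) (C : AddSubgroup G) (g h : H) :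
    h ∈ closure (f '' C ∪ {g}) ↔ ∃ c ∈ C, ∃ k : ℤ, f c + k • g = h := by
  rw [closure_union, ← coe_map, closure_eq, ← zmultiples_eq_closure, mem_sup]
  simp only [mem_map, mem_zmultiples_iff]
  constructor
  · rintro ⟨_, ⟨c, hc, rfl⟩, _, ⟨k, rfl⟩, rfl⟩
    exact ⟨c, hc, k, rfl⟩
  · rintro ⟨c, hc, k, rfl⟩
    exact ⟨_, ⟨c, hc, rfl⟩, _, ⟨k, rfl⟩, rfl⟩

theorem maxDist_snoc_snoc {q n : ℕ} (a b : Fin n → ZMod q) (u v : ZMod q) :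
    maxDist (Fin.snoc a u : Fin (n + 1) → ZMod q) (Fin.snoc b v) = leeDist u v ⊔ maxDist a b := by
  simp [maxDist, Fin.univ_castSuccEmb, Finset.sup_map, Function.comp_def]

theorem maxDist_sub_right {q n : ℕ} (a b c : Fin n → ZMod q) :
    maxDist (a - c) (b - c) = maxDist a b := by
  simp only [maxDist, leeDist, Pi.sub_apply, sub_sub_sub_cancel_right]

theorem stmt12_general (e t q n : ℕ) (ht : 2 ≤ t) (hq : q = (2 * e + 1) * t)
    (C : AddSubgroup (Fin n → ZMod q))
    (hC : IsPerfectCode e (C : Set (Fin n → ZMod q)))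
    (x : Fin n → ZMod q) (hx : t • x ∈ C) :
    IsPerfectCode e
      (((AddSubgroup.closure
        (((fun c : Fin n → ZMod q => Fin.snoc c (0 : ZMod q)) ''
            (C : Set (Fin n → ZMod q)) ∪
          {Fin.snoc x ((2 * e + 1 : ℕ) : ZMod q)} :
          Set (Fin (n + 1) → ZMod q)))) : AddSubgroup (Fin (n + 1) → ZMod q)) :
        Set (Fin (n + 1) → ZMod q)) := by
  have ht_pos : 0 < t := by omega
  set w : ZMod q := ((2 * e + 1 : ℕ) : ZMod q)
  rw [← Fin.coe_snocZeroHom]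
  have mem_code (p : Fin (n + 1) → ZMod q) :
      p ∈ AddSubgroup.closure (Fin.snocZeroHom (ZMod q) n '' C ∪ {Fin.snoc x w}) ↔
        ∃ c ∈ C, ∃ k : ℤ, Fin.snoc (c + k • x) (k • w) = p := by
    rw [AddSubgroup.mem_closure_image_union_singleton]
    simp only [Fin.coe_snocZeroHom, Fin.smul_snoc, Fin.snoc_add_snoc, zero_add]
  have zsmul_mem_of_dvd {j : ℤ} (hj : (t : ℤ) ∣ j) : j • x ∈ C := by
    obtain ⟨s, rfl⟩ := hj
    rw [mul_comm, mul_zsmul, natCast_zsmul]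
    exact zsmul_mem hx s
  intro p
  obtain ⟨z, y, rfl⟩ : ∃ z y, p = (Fin.snoc z y : Fin (n + 1) → ZMod q) :=
    ⟨_, _, (Fin.snoc_init_self p).symm⟩
  obtain ⟨k, hk⟩ := exists_leeDist_zsmul_le hq ht_pos y
  obtain ⟨c, ⟨hcC, hcz⟩, hc_unique⟩ := hC (z - k • x)
  refine ⟨Fin.snoc (c + k • x) (k • w), ⟨(mem_code _).2 ⟨c, hcC, k, rfl⟩, ?_⟩, ?_⟩
  · rw [maxDist_snoc_snoc, sup_le_iff, ← maxDist_sub_right z _ (k • x), add_sub_cancel_right]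
    exact ⟨hk, hcz⟩
  rintro _ ⟨hd, hdz⟩
  obtain ⟨c', hc'C, k', rfl⟩ := (mem_code _).1 hd
  obtain ⟨hdy, hdz⟩ := sup_le_iff.1 ((maxDist_snoc_snoc _ _ _ _).symm.trans_le hdz)
  have hkk' : (t : ℤ) ∣ k' - k := dvd_sub_of_leeDist_zsmul_le hq ht_pos hdy hk
  have hshift : c' + (k' - k) • x = c' + k' • x - k • x := by rw [sub_zsmul]; abel
  have hc' : c' + (k' - k) • x = c := hc_unique _
    ⟨add_mem hc'C (zsmul_mem_of_dvd hkk'), by rwa [hshift, maxDist_sub_right]⟩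
  rw [zsmul_eq_zsmul_of_dvd_sub hq hkk', ← hc', hshift, sub_add_cancel]

/-- Linear construction: from a linear perfect `e`-code `C ⊆ (ZMod q)^n` and
`x` with `t·x ∈ C`, the subgroup of `(ZMod q)^{n+1}` generated by `C × {0}`
and `(x, 2e+1)` is a perfect `e`-code. -/
theorem stmt12 (e t q n : ℕ) (ht : 2 ≤ t) (hq : q = (2 * e + 1) * t) (hn : 1 ≤ n)
    (C : AddSubgroup (Fin n → ZMod q))
    (hC : IsPerfectCode e (C : Set (Fin n → ZMod q)))
    (x : Fin n → ZMod q) (hx : t • x ∈ C) :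
    IsPerfectCode e
      (((AddSubgroup.closure
        (((fun c : Fin n → ZMod q => Fin.snoc c (0 : ZMod q)) ''
            (C : Set (Fin n → ZMod q)) ∪
          {Fin.snoc x ((2 * e + 1 : ℕ) : ZMod q)} :
          Set (Fin (n + 1) → ZMod q)))) : AddSubgroup (Fin (n + 1) → ZMod q)) :
        Set (Fin (n + 1) → ZMod q)) :=
  stmt12_general e t q n ht hq C hC x hx
end

section
/- Let n ≥ 1 and q = (2e+1)·t with integers e ≥ 0 and t ≥ 2, and assume t^{n−1} divides 2e+1. Write m = 2e+1 and let g ∈ Z_q^n be the element whose i-th coordinate (1 ≤ i ≤ n) is m / t^{n−i} reduced mod q, i.e. g = (m/t^{n−1}, m/t^{n−2}, …, m/t, m). Then the cyclic additive subgroup of Z_q^n generated by g is a perfect e-code. -/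
lemma lee_le_natAbs {q : ℕ} [NeZero q] (z : ℤ) : leeDist ((z : ZMod q)) 0 ≤ z.natAbs := by
  simp only [leeDist, sub_zero]
  rcases le_or_gt 0 z with hz | hz
  · have h1 : (z : ZMod q) = ((z.natAbs : ℕ) : ZMod q) := by
      rw [← Int.cast_natCast, Int.natAbs_of_nonneg hz]
    rw [h1]
    have := Nat.mod_le z.natAbs q
    calc min ((z.natAbs : ZMod q)).val (q - ((z.natAbs : ZMod q)).val)
        ≤ ((z.natAbs : ZMod q)).val := min_le_left _ _
      _ ≤ z.natAbs := by rw [ZMod.val_natCast]; exact Nat.mod_le _ _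
  · have h1 : (z : ZMod q) = -((z.natAbs : ℕ) : ZMod q) := by
      rw [← Int.cast_natCast, ← Int.cast_neg]
      congr 1
      omega
    rw [h1]
    by_cases h0 : ((z.natAbs : ℕ) : ZMod q) = 0
    · simp [h0]
    · rw [ZMod.neg_val, if_neg h0]
      have hv : ((z.natAbs : ℕ) : ZMod q).val ≤ z.natAbs := by
        rw [ZMod.val_natCast]; exact Nat.mod_le _ _
      have hvlt : ((z.natAbs : ℕ) : ZMod q).val < q := ZMod.val_lt _
      calc min (q - ((z.natAbs : ZMod q)).val) (q - (q - ((z.natAbs : ZMod q)).val))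
          ≤ q - (q - ((z.natAbs : ZMod q)).val) := min_le_right _ _
        _ = ((z.natAbs : ZMod q)).val := by omega
        _ ≤ z.natAbs := hv

lemma lee_rep {q : ℕ} [NeZero q] (x y : ZMod q) :
    ∃ z : ℤ, ((z : ZMod q)) = x - y ∧ z.natAbs = leeDist x y := by
  set d := x - y with hd
  have hdv : d.val < q := ZMod.val_lt _
  rcases le_or_gt (d.val) (q - d.val) with h | h
  · refine ⟨(d.val : ℤ), ?_, ?_⟩
    · rw [Int.cast_natCast, ZMod.natCast_val, ZMod.cast_id]
    · simp only [Int.natAbs_natCast, leeDist, ← hd]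
      exact (min_eq_left h).symm
  · refine ⟨(d.val : ℤ) - q, ?_, ?_⟩
    · rw [Int.cast_sub, Int.cast_natCast, Int.cast_natCast, ZMod.natCast_self, sub_zero,
        ZMod.natCast_val, ZMod.cast_id]
    · have h2 : ((d.val : ℤ) - q).natAbs = q - d.val := by omega
      rw [h2]
      simp only [leeDist, ← hd]
      exact (min_eq_right (le_of_lt h)).symm

lemma lee_symm {q : ℕ} [NeZero q] (x y : ZMod q) : leeDist x y = leeDist y x := by
  simp only [leeDist]
  have h : y - x = -(x - y) := by ring
  by_cases h0 : x - y = 0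
  · have h0' : y - x = 0 := by rw [h, h0, neg_zero]
    rw [h0, h0']
  · have hv : (x - y).val < q := ZMod.val_lt _
    have hv0 : (x - y).val ≠ 0 := fun h' => h0 ((ZMod.val_eq_zero _).mp h')
    rw [h, ZMod.neg_val, if_neg h0]
    omega

lemma lee_triangle {q : ℕ} [NeZero q] (x y z : ZMod q) :
    leeDist x z ≤ leeDist x y + leeDist y z := by
  obtain ⟨a, ha, ha'⟩ := lee_rep x y
  obtain ⟨b, hb, hb'⟩ := lee_rep y z
  have hxz : x - z = ((a + b : ℤ) : ZMod q) := by push_cast [ha, hb]; ring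
  have : leeDist x z = leeDist ((a + b : ℤ) : ZMod q) 0 := by
    simp only [leeDist, sub_zero, ← hxz]
  rw [this]
  calc leeDist ((a + b : ℤ) : ZMod q) 0 ≤ (a + b).natAbs := lee_le_natAbs _
    _ ≤ a.natAbs + b.natAbs := Int.natAbs_add_le _ _
    _ = leeDist x y + leeDist y z := by rw [ha', hb']

lemma int_eq_zero_of_dvd_of_natAbs_lt {d : ℤ} {N : ℕ} (h : (N : ℤ) ∣ d)
    (h2 : d.natAbs < N) : d = 0 := by
  have h3 : N ∣ d.natAbs := by
    have := Int.natAbs_dvd_natAbs.mpr h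
    simpa using this
  have h4 : d.natAbs = 0 := Nat.eq_zero_of_dvd_of_lt h3 h2
  exact Int.natAbs_eq_zero.mp h4

/-- Key arithmetic lemma: if `a*m` has Lee weight `< m` mod `m*t` then `t ∣ a`. -/
lemma keyA (m t : ℕ) (hm : 0 < m) (ht : 0 < t) (a : ℤ)
    (h : leeDist (((a * m : ℤ) : ZMod (m * t))) 0 < m) : (t : ℤ) ∣ a := by
  haveI : NeZero (m * t) := ⟨by positivity⟩
  set b : ℤ := a % t with hb
  have hb0 : 0 ≤ b := Int.emod_nonneg a (by exact_mod_cast ht.ne')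
  have hbt : b < t := Int.emod_lt_of_pos a (by exact_mod_cast ht)
  have hcast : ((a * m : ℤ) : ZMod (m * t)) = ((b * m : ℤ) : ZMod (m * t)) := by
    have hdvd : ((m * t : ℕ) : ℤ) ∣ (a * m - b * m) := by
      have h1 : (t : ℤ) ∣ a - b := Int.dvd_self_sub_of_emod_eq rfl
      obtain ⟨c, hc⟩ := h1
      refine ⟨c, ?_⟩
      push_cast
      rw [show a * (m:ℤ) - b * m = (a - b) * m by ring, hc]; ring
    have h0 : ((a * m - b * m : ℤ) : ZMod (m * t)) = 0 :=
      (ZMod.intCast_zmod_eq_zero_iff_dvd _ _).mpr hdvd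
    have h1 : ((a * m : ℤ) : ZMod (m * t)) - ((b * m : ℤ) : ZMod (m * t)) = 0 := by
      push_cast at h0 ⊢
      linear_combination h0
    exact sub_eq_zero.mp h1
  rw [hcast] at h
  set B : ℕ := b.toNat with hB
  have hbB : b = (B : ℤ) := by omega
  have hBt : B < t := by omega
  by_cases hB0 : B = 0
  · have : b = 0 := by omega
    exact Int.dvd_of_emod_eq_zero (by omega)
  · exfalso
    have hlt : B * m < m * t := by
      calc B * m < t * m := Nat.mul_lt_mul_of_lt_of_le hBt (le_refl m) hm
        _ = m * t := Nat.mul_comm t m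
    have hc2 : ((b * m : ℤ) : ZMod (m * t)) = ((B * m : ℕ) : ZMod (m * t)) := by
      rw [hbB]; push_cast; ring
    rw [hc2] at h
    have hval : (((B * m : ℕ) : ZMod (m * t))).val = B * m := ZMod.val_cast_of_lt hlt
    simp only [leeDist, sub_zero, hval] at h
    have h1 : m ≤ B * m := Nat.le_mul_of_pos_left m (Nat.pos_of_ne_zero hB0)
    have h3 : m * (B + 1) ≤ m * t := Nat.mul_le_mul_left m hBt
    have h4 : m * (B + 1) = B * m + m := by ring
    omega

/-- The cyclic code generated by `(m/t^{n-1}, m/t^{n-2}, …, m/t, m)` with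
`m = 2e+1` and `t^{n-1} ∣ m` is a perfect `e`-code. -/
theorem stmt13 (n e t q : ℕ) (hn : 1 ≤ n) (ht : 2 ≤ t) (hq : q = (2 * e + 1) * t)
    (hdvd : t ^ (n - 1) ∣ 2 * e + 1) :
    IsPerfectCode e
      ((AddSubgroup.closure
          {(fun i : Fin n => (((2 * e + 1) / t ^ (n - 1 - (i : ℕ)) : ℕ) : ZMod q))} :
        AddSubgroup (Fin n → ZMod q)) : Set (Fin n → ZMod q)) := by
  subst hq
  set m := 2 * e + 1 with hm
  have hm1 : 0 < m := by omega
  have ht0 : 0 < t := by omega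
  have hq0 : 0 < m * t := by positivity
  haveI : NeZero (m * t) := ⟨hq0.ne'⟩
  haveI : NeZero (t ^ n) := ⟨pow_ne_zero _ (by omega)⟩
  set g : Fin n → ZMod (m * t) := fun i : Fin n => ((m / t ^ (n - 1 - (i : ℕ)) : ℕ) : ZMod (m * t)) with hg
  -- coordinates of integer multiples of g
  have hcoord : ∀ (k : ℤ) (i : Fin n), (k • g) i = ((k * (m / t ^ (n - 1 - (i : ℕ)) : ℕ) : ℤ) : ZMod (m * t)) := by
    intro k i
    have h1 : (k • g) i = k • (g i) := rfl
    rw [h1, hg]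
    simp only [zsmul_eq_mul]
    rw [Int.cast_mul, Int.cast_natCast]
  -- key divisibility lemma
  have keyB : ∀ k : ℤ, (∀ i : Fin n, leeDist ((k • g) i) 0 < m) → ((t : ℤ)) ^ n ∣ k := by
    intro k hk
    have main : ∀ j, j ≤ n → ((t : ℤ)) ^ j ∣ k := by
      intro j
      induction j with
      | zero => intro _; simp
      | succ j ih =>
        intro hj1
        obtain ⟨k', hk'⟩ := ih (by omega)
        have hjn : j ≤ n - 1 := by omega
        have hdj : t ^ j ∣ m := dvd_trans (pow_dvd_pow t hjn) hdvd
        set i : Fin n := ⟨n - 1 - j, by omega⟩ with hi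
        have hii : n - 1 - (i : ℕ) = j := by simp only [hi]; omega
        have hc2 : (k • g) i = ((k' * m : ℤ) : ZMod (m * t)) := by
          rw [hcoord k i, hii]
          congr 1
          have hmul : (t : ℤ) ^ j * ((m / t ^ j : ℕ) : ℤ) = (m : ℤ) := by
            exact_mod_cast congrArg (Nat.cast : ℕ → ℤ) (Nat.mul_div_cancel' hdj)
          rw [hk']
          calc (t : ℤ) ^ j * k' * ((m / t ^ j : ℕ) : ℤ)
              = k' * ((t : ℤ) ^ j * ((m / t ^ j : ℕ) : ℤ)) := by ring
            _ = k' * m := by rw [hmul]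
        have hlt := hk i
        rw [hc2] at hlt
        obtain ⟨c, hc⟩ := keyA m t hm1 ht0 k' hlt
        exact ⟨c, by rw [hk', hc]; ring⟩
    exact main n le_rfl
  -- multiples of t^n kill g
  have zero_of : ∀ k : ℤ, ((t : ℤ)) ^ n ∣ k → k • g = 0 := by
    intro k hdk
    obtain ⟨k', hk'⟩ := hdk
    funext i
    rw [hcoord k i]
    have hji : n - 1 - (i : ℕ) ≤ n - 1 := by omega
    set j := n - 1 - (i : ℕ) with hj
    have hdj : t ^ j ∣ m := dvd_trans (pow_dvd_pow t hji) hdvd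
    have hmul : (t : ℤ) ^ j * ((m / t ^ j : ℕ) : ℤ) = (m : ℤ) := by
      exact_mod_cast congrArg (Nat.cast : ℕ → ℤ) (Nat.mul_div_cancel' hdj)
    have hpow : (t : ℤ) ^ n = (t : ℤ) ^ (n - 1 - j) * (t : ℤ) * (t : ℤ) ^ j := by
      rw [← pow_succ, ← pow_add]
      congr 1
      omega
    show ((k * (m / t ^ j : ℕ) : ℤ) : ZMod (m * t)) = 0
    rw [ZMod.intCast_zmod_eq_zero_iff_dvd]
    refine ⟨k' * (t : ℤ) ^ (n - 1 - j), ?_⟩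
    rw [Nat.cast_mul]
    calc k * ((m / t ^ j : ℕ) : ℤ)
        = k' * (t : ℤ) ^ (n - 1 - j) * (t : ℤ) * ((t : ℤ) ^ j * ((m / t ^ j : ℕ) : ℤ)) := by
          rw [hk', hpow]; ring
      _ = (m : ℤ) * t * (k' * (t : ℤ) ^ (n - 1 - j)) := by rw [hmul]; ring
  -- uniqueness of close codewords
  have uniq : ∀ (x c c' : Fin n → ZMod (m * t)),
      c ∈ AddSubgroup.closure {g} → c' ∈ AddSubgroup.closure {g} →
      maxDist x c ≤ e → maxDist x c' ≤ e → c = c' := by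
    intro x c c' hc hc' hxc hxc'
    obtain ⟨z, hz⟩ := AddSubgroup.mem_closure_singleton.mp hc
    obtain ⟨z', hz'⟩ := AddSubgroup.mem_closure_singleton.mp hc'
    have hall : ∀ i : Fin n, leeDist (((z - z') • g) i) 0 < m := by
      intro i
      have h1 : leeDist (x i) (c i) ≤ e := by
        have h0 := Finset.le_sup (f := fun i => leeDist (x i) (c i)) (Finset.mem_univ i)
        exact le_trans h0 hxc
      have h2 : leeDist (x i) (c' i) ≤ e := by
        have h0 := Finset.le_sup (f := fun i => leeDist (x i) (c' i)) (Finset.mem_univ i)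
        exact le_trans h0 hxc'
      have h3 : ((z - z') • g) i = c i - c' i := by
        have h3' : (z - z') • g = c - c' := by
          rw [sub_zsmul, hz, hz']
          exact (sub_eq_add_neg c c').symm
        rw [h3', Pi.sub_apply]
      have h4 : leeDist (((z - z') • g) i) 0 = leeDist (c i) (c' i) := by
        rw [h3]; simp [leeDist]
      rw [h4]
      calc leeDist (c i) (c' i) ≤ leeDist (c i) (x i) + leeDist (x i) (c' i) :=
            lee_triangle _ _ _
        _ ≤ e + e := by rw [lee_symm]; exact Nat.add_le_add h1 h2
        _ < m := by omega
    have hzero := zero_of _ (keyB _ hall)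
    have hzg : z • g - z' • g = 0 := by
      rw [sub_eq_add_neg, ← sub_zsmul]
      exact hzero
    have : z • g = z' • g := sub_eq_zero.mp hzg
    rw [← hz, ← hz', this]
  -- the covering map
  let F : ZMod (t ^ n) × (Fin n → Fin m) → (Fin n → ZMod (m * t)) :=
    fun p => (p.1.val : ℤ) • g + fun i => ((((p.2 i : ℕ) : ℤ) - e : ℤ) : ZMod (m * t))
  have hFinj : Function.Injective F := by
    rintro ⟨k, r⟩ ⟨k', r'⟩ hF
    have hco : ∀ i : Fin n,
        (((k.val : ℤ) - (k'.val : ℤ)) • g) i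
          = (((((r' i : ℕ) : ℤ) - e) - (((r i : ℕ) : ℤ) - e) : ℤ) : ZMod (m * t)) := by
      intro i
      have h0 := congrFun hF i
      simp only [F, Pi.add_apply, Pi.smul_apply] at h0
      have e1 : ((k.val : ℤ)) • g i = (((k.val : ℤ) * (m / t ^ (n - 1 - (i : ℕ)) : ℕ) : ℤ) : ZMod (m * t)) := hcoord _ i
      have e2 : ((k'.val : ℤ)) • g i = (((k'.val : ℤ) * (m / t ^ (n - 1 - (i : ℕ)) : ℕ) : ℤ) : ZMod (m * t)) := hcoord _ i
      rw [e1, e2] at h0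
      rw [hcoord]
      rw [Int.cast_mul, Int.cast_mul, Int.cast_sub, Int.cast_sub] at h0
      rw [Int.cast_mul, Int.cast_sub, Int.cast_sub, Int.cast_sub, Int.cast_sub]
      linear_combination h0
    have hall : ∀ i : Fin n, leeDist ((((k.val : ℤ) - (k'.val : ℤ)) • g) i) 0 < m := by
      intro i
      rw [hco i]
      have hb := lee_le_natAbs (q := m * t) (((((r' i : ℕ) : ℤ) - e) - (((r i : ℕ) : ℤ) - e) : ℤ))
      have h1 : (r' i : ℕ) < m := (r' i).isLt
      have h2 : (r i : ℕ) < m := (r i).isLt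
      have h3 : (((((r' i : ℕ) : ℤ) - e) - (((r i : ℕ) : ℤ) - e) : ℤ)).natAbs < m := by omega
      omega
    have hdv := keyB _ hall
    have hkk : k = k' := by
      have h1 : (k.val : ℤ) < (t ^ n : ℕ) := by exact_mod_cast ZMod.val_lt k
      have h2 : (k'.val : ℤ) < (t ^ n : ℕ) := by exact_mod_cast ZMod.val_lt k'
      have h3 : ((t : ℤ)) ^ n = ((t ^ n : ℕ) : ℤ) := by push_cast; ring
      rw [h3] at hdv
      have h4 : (k.val : ℤ) = (k'.val : ℤ) := by
        have h5 : ((k.val : ℤ) - (k'.val : ℤ)).natAbs < t ^ n := by omega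
        have h6 := int_eq_zero_of_dvd_of_natAbs_lt hdv h5
        omega
      have := ZMod.val_injective _ (by exact_mod_cast h4 : k.val = k'.val)
      exact this
    have hrr : r = r' := by
      funext i
      have h5 := hco i
      rw [hkk, sub_self, zero_zsmul] at h5
      have h6 : (((((r' i : ℕ) : ℤ) - e) - (((r i : ℕ) : ℤ) - e) : ℤ) : ZMod (m * t)) = 0 := by
        rw [← h5]; rfl
      have h7 := (ZMod.intCast_zmod_eq_zero_iff_dvd _ _).mp h6
      have h1 : (r' i : ℕ) < m := (r' i).isLt
      have h2 : (r i : ℕ) < m := (r i).isLt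
      have hmq : m ≤ m * t := Nat.le_mul_of_pos_right m ht0
      have h9 : (((((r' i : ℕ) : ℤ) - e) - (((r i : ℕ) : ℤ) - e) : ℤ)).natAbs < m * t := by
        omega
      have h10 := int_eq_zero_of_dvd_of_natAbs_lt h7 h9
      exact Fin.ext (by omega)
    rw [hkk, hrr]
  have hcard : Fintype.card (ZMod (t ^ n) × (Fin n → Fin m)) = Fintype.card (Fin n → ZMod (m * t)) := by
    rw [Fintype.card_prod, Fintype.card_fun, Fintype.card_fun]
    simp only [ZMod.card, Fintype.card_fin]
    rw [mul_pow]
    ring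
  have hFbij : Function.Bijective F := by
    rw [Fintype.bijective_iff_injective_and_card]
    exact ⟨hFinj, hcard⟩
  -- the proof of perfectness
  intro x
  obtain ⟨⟨k, r⟩, hkr⟩ := hFbij.2 x
  refine ⟨(k.val : ℤ) • g, ⟨?_, ?_⟩, ?_⟩
  · exact AddSubgroup.zsmul_mem _ (AddSubgroup.subset_closure (Set.mem_singleton g)) _
  · refine Finset.sup_le fun i _ => ?_
    have hx : x i = ((k.val : ℤ) • g) i + ((((r i : ℕ) : ℤ) - e : ℤ) : ZMod (m * t)) := by
      rw [← hkr]; rfl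
    have hdiff : x i - ((k.val : ℤ) • g) i = ((((r i : ℕ) : ℤ) - e : ℤ) : ZMod (m * t)) := by
      rw [hx]; ring
    have h8 : leeDist (x i) (((k.val : ℤ) • g) i)
        = leeDist (((((r i : ℕ) : ℤ) - e : ℤ) : ZMod (m * t))) 0 := by
      simp only [leeDist, sub_zero, hdiff]
    rw [h8]
    calc leeDist (((((r i : ℕ) : ℤ) - e : ℤ) : ZMod (m * t))) 0
        ≤ ((((r i : ℕ) : ℤ) - e : ℤ)).natAbs := lee_le_natAbs _
      _ ≤ e := by have := (r i).isLt; omega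
  · rintro c' ⟨hc'mem, hc'd⟩
    refine uniq x c' ((k.val : ℤ) • g) hc'mem ?_ hc'd ?_
    · exact AddSubgroup.zsmul_mem _ (AddSubgroup.subset_closure (Set.mem_singleton g)) _
    · refine Finset.sup_le fun i _ => ?_
      have hx : x i = ((k.val : ℤ) • g) i + ((((r i : ℕ) : ℤ) - e : ℤ) : ZMod (m * t)) := by
        rw [← hkr]; rfl
      have hdiff : x i - ((k.val : ℤ) • g) i = ((((r i : ℕ) : ℤ) - e : ℤ) : ZMod (m * t)) := by
        rw [hx]; ring
      have h8 : leeDist (x i) (((k.val : ℤ) • g) i)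
          = leeDist (((((r i : ℕ) : ℤ) - e : ℤ) : ZMod (m * t))) 0 := by
        simp only [leeDist, sub_zero, hdiff]
      rw [h8]
      calc leeDist (((((r i : ℕ) : ℤ) - e : ℤ) : ZMod (m * t))) 0
          ≤ ((((r i : ℕ) : ℤ) - e : ℤ)).natAbs := lee_le_natAbs _
        _ ≤ e := by have := (r i).isLt; omega
end

section
/- Let n ≥ 1 and q = (2e+1)·t with integers e ≥ 0 and t ≥ 2. There exists an additive subgroup C of Z_q^n that is a perfect e-code and is cyclic as a group if and only if t^{n−1} divides 2e+1. -/
lemma leeDist_sub {q : ℕ} (x y : ZMod q) : leeDist x y = leeDist (x - y) 0 := by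
  simp [leeDist]

lemma int_cast_eq_zero_small {q : ℕ} (d : ℤ) (hlt : d.natAbs < q)
    (h : (d : ZMod q) = 0) : d = 0 := by
  rw [ZMod.intCast_zmod_eq_zero_iff_dvd] at h
  have h2 := Int.natAbs_dvd_natAbs.mpr h
  simp only [Int.natAbs_natCast] at h2
  have := Nat.eq_zero_of_dvd_of_lt h2
  omega

lemma leeDist_zero_le_iff {q e : ℕ} [NeZero q] (he : e < q) (z : ZMod q) :
    leeDist z 0 ≤ e ↔ ∃ d : ℤ, d.natAbs ≤ e ∧ (d : ZMod q) = z := by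
  have hzval : z.val < q := z.val_lt
  constructor
  · intro h
    rw [leeDist, sub_zero] at h
    rcases le_or_gt z.val e with h1 | h1
    · refine ⟨(z.val : ℕ), by simp only [Int.natAbs_natCast]; exact h1, ?_⟩
      push_cast
      simp [ZMod.natCast_val, ZMod.cast_id]
    · refine ⟨(z.val : ℤ) - q, by omega, ?_⟩
      push_cast
      simp [ZMod.natCast_val, ZMod.cast_id]
  · rintro ⟨d, hd, rfl⟩
    rw [leeDist, sub_zero]
    rcases le_or_gt 0 d with h1 | h1
    · lift d to ℕ using h1
      simp only [Int.natAbs_natCast] at hd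
      have : d < q := by omega
      rw [Int.cast_natCast, ZMod.val_cast_of_lt this]
      omega
    · set a : ℕ := d.natAbs with ha
      have hd' : (d : ZMod q) = -(a : ZMod q) := by
        have : (d : ℤ) = -(a : ℤ) := by omega
        rw [this]; push_cast; ring
      have ha0 : 0 < a := by omega
      have haq : a < q := by omega
      have hval : ((a : ZMod q)).val = a := ZMod.val_cast_of_lt haq
      have hane : (a : ZMod q) ≠ 0 := by
        intro h
        rw [h] at hval
        simp [ZMod.val_zero] at hval
        omega
      rw [hd', ZMod.neg_val]
      simp only [hane, if_false, hval]
      omega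

lemma key_dvd {n e t s q : ℕ} (hq : q = (2*e+1) * t) (hk : 2*e+1 = s * t^(n-1))
    (m : ℤ)
    (h : ∀ i : Fin n, ∃ d : ℤ, d.natAbs ≤ 2*e ∧
      (((s * t^(n-1-(i:ℕ)) : ℕ) : ZMod q) * (m : ZMod q) = (d : ZMod q))) :
    (t:ℤ)^n ∣ m := by
  suffices H : ∀ j, j ≤ n → (t:ℤ)^j ∣ m by exact H n le_rfl
  intro j hj
  induction j with
  | zero => simp
  | succ j ih =>
    obtain ⟨m', rfl⟩ := ih (by omega)
    obtain ⟨d, hd, hcast⟩ := h ⟨j, by omega⟩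
    have hj' : n - 1 - j + j = n - 1 := by omega
    have hexp : (s:ℤ) * (t:ℤ)^(n-1-j) * (t:ℤ)^j = 2*(e:ℤ)+1 := by
      rw [mul_assoc, ← pow_add, hj']
      have h1 : ((s * t^(n-1) : ℕ) : ℤ) = ((2*e+1 : ℕ) : ℤ) := by rw [← hk]
      push_cast at h1
      linarith
    have hdvd : ((2*(e:ℤ)+1) * t) ∣ (2*(e:ℤ)+1) * m' - d := by
      have h0 : ((((s * t^(n-1-j) : ℕ) : ℤ) * ((t:ℤ)^j * m') - d : ℤ) : ZMod q) = 0 := by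
        push_cast at hcast ⊢
        rw [sub_eq_zero]
        exact hcast
      rw [ZMod.intCast_zmod_eq_zero_iff_dvd] at h0
      have hq' : (q:ℤ) = (2*(e:ℤ)+1) * t := by push_cast [hq]; ring
      rw [hq'] at h0
      have h2 : ((s * t^(n-1-j) : ℕ) : ℤ) * ((t:ℤ)^j * m') = (2*(e:ℤ)+1) * m' := by
        push_cast
        rw [← hexp]
        ring
      rwa [h2] at h0
    have hkd : (2*(e:ℤ)+1) ∣ d := by
      have h1 : (2*(e:ℤ)+1) ∣ (2*(e:ℤ)+1) * m' - d :=
        dvd_trans (dvd_mul_right (2*(e:ℤ)+1) (t:ℤ)) hdvd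
      have h2 : (2*(e:ℤ)+1) ∣ (2*(e:ℤ)+1) * m' := dvd_mul_right _ _
      simpa using dvd_sub h2 h1
    have hd0 : d = 0 := by
      rcases hkd with ⟨c, hc⟩
      have h3 : d.natAbs = (2*e+1) * c.natAbs := by
        have hna : (2*(e:ℤ)+1).natAbs = 2*e+1 := by omega
        rw [hc, Int.natAbs_mul, hna]
      have h4 : c.natAbs = 0 := by
        rcases Nat.eq_zero_or_pos c.natAbs with h | h
        · exact h
        · nlinarith
      have : c = 0 := Int.natAbs_eq_zero.mp h4
      simp [hc, this]
    rw [hd0, sub_zero] at hdvd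
    have htm : (t:ℤ) ∣ m' := by
      rcases e.eq_zero_or_pos with _ | _ <;>
      · have hne : (2*(e:ℤ)+1) ≠ 0 := by positivity
        rwa [mul_dvd_mul_iff_left hne] at hdvd
    rcases htm with ⟨m'', rfl⟩
    exact ⟨m'', by ring⟩
-- ball cardinality

lemma card_ball {q e : ℕ} [NeZero q] (h2e : 2*e < q) :
    Nat.card {z : ZMod q // leeDist z 0 ≤ e} = 2*e+1 := by
  have he : e < q := by omega
  have hψ : Function.Bijective (fun j : Fin (2*e+1) =>
      (⟨((((j:ℕ):ℤ) - e : ℤ) : ZMod q), by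
        refine (leeDist_zero_le_iff he _).mpr ⟨((j:ℕ):ℤ) - e, ?_, rfl⟩
        have hj : (j:ℕ) < 2*e+1 := j.isLt
        omega⟩ : {z : ZMod q // leeDist z 0 ≤ e})) := by
    constructor
    · intro j j' hjj
      have h0 : (((((j:ℕ):ℤ) - e) - (((j':ℕ):ℤ) - e) : ℤ) : ZMod q) = 0 := by
        have := congrArg (fun z => z.1) hjj
        push_cast at this ⊢
        simp only [sub_eq_zero]
        linear_combination this
      have := int_cast_eq_zero_small (q := q) ((((j:ℕ):ℤ) - e) - (((j':ℕ):ℤ) - e))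
        (by have hj : (j:ℕ) < 2*e+1 := j.isLt
            have hj' : (j':ℕ) < 2*e+1 := j'.isLt
            omega) h0
      have : (j:ℕ) = (j':ℕ) := by omega
      exact Fin.ext this
    · rintro ⟨z, hz⟩
      obtain ⟨d, hd, hdz⟩ := (leeDist_zero_le_iff he z).mp hz
      refine ⟨⟨(d + e).toNat, by omega⟩, ?_⟩
      apply Subtype.ext
      simp only
      rw [← hdz]
      congr 1
      omega
  rw [Nat.card_congr (Equiv.ofBijective _ hψ).symm, Nat.card_eq_fintype_card,
    Fintype.card_fin]

/-- Existence of cyclic linear perfect `e`-codes in `(ZMod q)^n` iff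
`t^{n-1} ∣ 2e+1`. -/
theorem stmt14 (n e t q : ℕ) (hn : 1 ≤ n) (ht : 2 ≤ t) (hq : q = (2 * e + 1) * t) :
    (∃ C : AddSubgroup (Fin n → ZMod q),
        IsPerfectCode e (C : Set (Fin n → ZMod q)) ∧ IsAddCyclic C) ↔
    t ^ (n - 1) ∣ 2 * e + 1 := by
  have hq0 : q ≠ 0 := by rw [hq]; positivity
  haveI : NeZero q := ⟨hq0⟩
  have h2e : 2*e < q := by nlinarith
  have he : e < q := by omega
  constructor
  · rintro ⟨C, hC, hcyc⟩
    -- counting: Nat.card C * (2e+1)^n = q^n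
    set B := {v : Fin n → ZMod q // ∀ i, leeDist (v i) 0 ≤ e} with hB
    have hmax : ∀ (x c : Fin n → ZMod q), maxDist x c ≤ e ↔ ∀ i, leeDist (x i - c i) 0 ≤ e := by
      intro x c
      rw [maxDist, Finset.sup_le_iff]
      constructor
      · intro h i; rw [← leeDist_sub]; exact h i (Finset.mem_univ i)
      · intro h i _; rw [leeDist_sub]; exact h i
    have hΘ : Function.Bijective (fun p : C × B => (p.1 : Fin n → ZMod q) + p.2.val) := by
      constructor
      · rintro ⟨c, b⟩ ⟨c', b'⟩ hcc
        simp only at hcc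
        have hd1 : maxDist ((c : Fin n → ZMod q) + b.val) c ≤ e := by
          rw [hmax]; intro i; simpa using b.2 i
        have hd2 : maxDist ((c : Fin n → ZMod q) + b.val) c' ≤ e := by
          rw [hcc, hmax]; intro i; simpa using b'.2 i
        obtain ⟨w, _, hw⟩ := hC ((c : Fin n → ZMod q) + b.val)
        have e1 : (c : Fin n → ZMod q) = w := hw c ⟨c.2, hd1⟩
        have e2 : (c' : Fin n → ZMod q) = w := hw c' ⟨c'.2, hd2⟩
        have ecc : (c : Fin n → ZMod q) = c' := e1.trans e2.symm
        have ebb : (b : Fin n → ZMod q) = b' := by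
          have := hcc; rw [ecc] at this
          exact add_left_cancel this
        exact Prod.ext (Subtype.ext ecc) (Subtype.ext ebb)
      · intro x
        obtain ⟨c, ⟨hcC, hcd⟩, _⟩ := hC x
        refine ⟨⟨⟨c, hcC⟩, ⟨x - c, fun i => ?_⟩⟩, by simp⟩
        have := (hmax x c).mp hcd i
        simpa using this
    have hcardV : Nat.card (Fin n → ZMod q) = Nat.card C * Nat.card B := by
      rw [Nat.card_congr (Equiv.ofBijective _ hΘ).symm, Nat.card_prod]
    have hcardB : Nat.card B = (2*e+1)^n := by
      rw [Nat.card_congr (Equiv.subtypePiEquivPi (p := fun _ z => leeDist z 0 ≤ e))]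
      rw [Nat.card_pi]
      simp only [card_ball h2e, Finset.prod_const, Finset.card_univ, Fintype.card_fin]
    have hcardVq : Nat.card (Fin n → ZMod q) = q^n := by
      simp [Nat.card_pi, ZMod.card]
    have hcardC : Nat.card C = t^n := by
      have h1 : q^n = Nat.card C * (2*e+1)^n := by rw [← hcardVq, hcardV, hcardB]
      have h2 : q^n = (2*e+1)^n * t^n := by rw [hq, mul_pow]
      have h3 : (2*e+1)^n * t^n = (2*e+1)^n * Nat.card C := by rw [← h2, h1, mul_comm]
      exact (Nat.eq_of_mul_eq_mul_left (by positivity) h3).symm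
    -- cyclic: t^n divides q
    obtain ⟨gen, hgen⟩ := hcyc
    have hgentop : AddSubgroup.zmultiples gen = ⊤ := by
      rw [AddSubgroup.eq_top_iff']; exact hgen
    have hcardgen : addOrderOf gen = t^n := by
      rw [← Nat.card_zmultiples gen, hgentop, ← hcardC]
      exact Nat.card_congr AddSubgroup.topEquiv.toEquiv
    have hqsmul : q • gen = 0 := by
      apply Subtype.ext
      show q • (gen : Fin n → ZMod q) = 0
      funext i
      simp only [Pi.smul_apply, Pi.zero_apply, nsmul_eq_mul]
      rw [ZMod.natCast_self, zero_mul]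
    have hdvdq : t^n ∣ q := by
      rw [← hcardgen]
      exact addOrderOf_dvd_of_nsmul_eq_zero hqsmul
    rw [hq] at hdvdq
    have hn' : t^n = t^(n-1) * t := by
      conv_lhs => rw [show n = (n-1) + 1 by omega]
      rw [pow_succ]
    rw [hn'] at hdvdq
    exact (Nat.mul_dvd_mul_iff_right (by omega : 0 < t)).mp hdvdq
  · intro hdvd
    obtain ⟨s, hs⟩ := hdvd
    have hs' : 2*e+1 = s * t^(n-1) := by rw [hs]; ring
    haveI : NeZero (t^n) := ⟨by positivity⟩
    have hqs : q = s * t^n := by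
      rw [hq, hs', mul_assoc, ← pow_succ]
      congr 2
      omega
    set g : Fin n → ZMod q := fun i => ((s * t^(n-1-(i:ℕ)) : ℕ) : ZMod q) with hg
    have hkey : ∀ m : ℤ, (∀ i : Fin n, ∃ d : ℤ, d.natAbs ≤ 2*e ∧
        g i * (m : ZMod q) = (d : ZMod q)) → (t:ℤ)^n ∣ m := by
      intro m h
      exact key_dvd hq hs' m h
    have hord : ∀ m : ℤ, ((t:ℤ)^n ∣ m) → m • g = 0 := by
      rintro m ⟨m', rfl⟩
      funext i
      simp only [Pi.smul_apply, Pi.zero_apply, zsmul_eq_mul, hg]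
      have h1 : (((t:ℤ)^n * m' : ℤ) : ZMod q) * ((s * t^(n-1-(i:ℕ)) : ℕ) : ZMod q)
          = ((m' : ZMod q)) * (((t^n * (s * t^(n-1-(i:ℕ))) : ℕ) : ZMod q)) := by
        push_cast; ring
      rw [h1]
      have h2 : (t^n * (s * t^(n-1-(i:ℕ))) : ℕ) = q * t^(n-1-(i:ℕ)) := by
        rw [hqs]; ring
      rw [h2]
      push_cast
      simp
    set Φ : ZMod (t^n) × (Fin n → Fin (2*e+1)) → (Fin n → ZMod q) :=
      fun p i => g i * (p.1.val : ZMod q) + ((p.2 i : ℕ) : ZMod q) - (e : ZMod q) with hΦ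
    have hinj : Function.Injective Φ := by
      rintro ⟨m, b⟩ ⟨m', b'⟩ hmm'
      have hco : ∀ i, g i * ((((m.val:ℤ) - (m'.val:ℤ)) : ℤ) : ZMod q)
          = ((((b' i : ℕ):ℤ) - ((b i : ℕ):ℤ) : ℤ) : ZMod q) := by
        intro i
        have h1 := congrFun hmm' i
        simp only [hΦ] at h1
        push_cast
        linear_combination h1
      have hdvd2 : (t:ℤ)^n ∣ (m.val:ℤ) - (m'.val:ℤ) := by
        refine hkey _ (fun i => ⟨((b' i : ℕ):ℤ) - ((b i : ℕ):ℤ), ?_, hco i⟩)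
        have hb1 : (b i : ℕ) < 2*e+1 := (b i).isLt
        have hb2 : (b' i : ℕ) < 2*e+1 := (b' i).isLt
        omega
      have hMeq : m.val = m'.val := by
        have h3 := Int.natAbs_dvd_natAbs.mpr hdvd2
        have h4 : ((t:ℤ)^n).natAbs = t^n := by
          rw [Int.natAbs_pow]; simp
        rw [h4] at h3
        have h5 : m.val < t^n := m.val_lt
        have h6 : m'.val < t^n := m'.val_lt
        rcases Nat.eq_zero_or_pos ((m.val:ℤ) - (m'.val:ℤ)).natAbs with h7 | h7
        · omega
        · have := Nat.le_of_dvd h7 h3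
          omega
      have hm : m = m' := by
        have := ZMod.val_injective (n := t^n) hMeq
        exact this
      have hb : b = b' := by
        funext i
        have h1 := congrFun hmm' i
        simp only [hΦ, hMeq] at h1
        have h2 : ((b i : ℕ) : ZMod q) = ((b' i : ℕ) : ZMod q) := by
          linear_combination h1
        have hb1 : (b i : ℕ) < q := by have := (b i).isLt; nlinarith
        have hb2 : (b' i : ℕ) < q := by have := (b' i).isLt; nlinarith
        have := ZMod.val_cast_of_lt hb1 ▸ ZMod.val_cast_of_lt hb2 ▸ congrArg ZMod.val h2
        exact Fin.ext this
      rw [hm, hb]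
    have hcards : Fintype.card (ZMod (t^n) × (Fin n → Fin (2*e+1)))
        = Fintype.card (Fin n → ZMod q) := by
      simp only [Fintype.card_prod, ZMod.card, Fintype.card_pi, Finset.prod_const,
        Finset.card_univ, Fintype.card_fin]
      rw [hq, mul_pow]
      ring
    have hbij : Function.Bijective Φ :=
      (Fintype.bijective_iff_injective_and_card Φ).mpr ⟨hinj, hcards⟩
    have hcyc : IsAddCyclic (AddSubgroup.zmultiples g) := by
      constructor
      refine ⟨⟨g, AddSubgroup.mem_zmultiples g⟩, ?_⟩
      rintro ⟨x, hx⟩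
      obtain ⟨k, hk⟩ := AddSubgroup.mem_zmultiples_iff.mp hx
      exact AddSubgroup.mem_zmultiples_iff.mpr ⟨k, Subtype.ext (by simpa using hk)⟩
    refine ⟨AddSubgroup.zmultiples g, ?_, hcyc⟩
    intro x
    obtain ⟨⟨m, b⟩, hmb⟩ := hbij.2 x
    set c : Fin n → ZMod q := fun i => g i * (m.val : ZMod q) with hc
    have hcg : ((m.val : ℕ):ℤ) • g = c := by
      funext i
      simp only [Pi.smul_apply, zsmul_eq_mul, hc]
      push_cast
      ring
    have hcC : c ∈ AddSubgroup.zmultiples g :=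
      AddSubgroup.mem_zmultiples_iff.mpr ⟨((m.val : ℕ):ℤ), hcg⟩
    have hxc : ∀ i, x i - c i = ((((b i : ℕ):ℤ) - e : ℤ) : ZMod q) := by
      intro i
      rw [← hmb]
      simp only [hΦ, hc]
      push_cast
      ring
    have hdist : maxDist x c ≤ e := by
      refine Finset.sup_le fun i _ => ?_
      rw [leeDist_sub, hxc i]
      refine (leeDist_zero_le_iff he _).mpr ⟨((b i : ℕ):ℤ) - e, ?_, rfl⟩
      have := (b i).isLt
      omega
    refine ⟨c, ⟨hcC, hdist⟩, ?_⟩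
    rintro c' ⟨hc'm, hc'd⟩
    obtain ⟨M, hM⟩ := AddSubgroup.mem_zmultiples_iff.mp hc'm
    have hdiff : ∀ i : Fin n, ∃ d : ℤ, d.natAbs ≤ 2*e ∧
        g i * ((((m.val:ℤ) - M) : ℤ) : ZMod q) = (d : ZMod q) := by
      intro i
      have hld : leeDist (x i - c' i) 0 ≤ e := by
        rw [← leeDist_sub]
        exact Finset.sup_le_iff.mp hc'd i (Finset.mem_univ i)
      obtain ⟨d', hd', hzd'⟩ := (leeDist_zero_le_iff he (x i - c' i)).mp hld
      refine ⟨d' - (((b i : ℕ):ℤ) - e), by (have := (b i).isLt; omega), ?_⟩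
      have hc'i : c' i = (M : ZMod q) * g i := by
        rw [← hM]
        simp [zsmul_eq_mul]
      have hxci := hxc i
      have hzd'' : (d' : ZMod q) = x i - c' i := hzd'
      push_cast
      push_cast at hxci hzd''
      rw [hc'i] at hzd''
      simp only [hc] at hxci
      linear_combination -hxci - hzd''
    have hdvd3 : (t:ℤ)^n ∣ ((m.val:ℤ) - M) := hkey _ hdiff
    have hzero : (((m.val:ℤ)) - M) • g = 0 := hord _ hdvd3
    have h8 : c - c' = ((m.val:ℤ) - M) • g := by
      rw [← hcg, ← hM, sub_zsmul]
      abel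
    rw [hzero] at h8
    exact (sub_eq_zero.mp h8).symm
end

section
/- Let q ≥ 2, n ≥ 1, e ≥ 0 be integers, let C ⊆ Z_q^n be a perfect e-code, and let I ⊆ {1,…,n}. Let H_I = {x ∈ Z_q^n : x_i = 0 for all i ∈ I}, let π_I : Z_q^n → Z_q^n be the projection that sets to 0 the coordinates indexed by I and leaves the other coordinates unchanged, and for each h ∈ H_I let f_C(h) denote the unique codeword c ∈ C with d∞(h, c) ≤ e. Define C⟨I⟩ = {π_I(f_C(h)) : h ∈ H_I}. Then C⟨I⟩ ⊆ H_I, and for every h ∈ H_I there is exactly one c ∈ C⟨I⟩ with d∞(h, c) ≤ e. -/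
/-- Section construction: the cartesian section `C⟨I⟩ = π_I(f_C(H_I))` of a
perfect `e`-code is a perfect `e`-code in the cartesian subgroup `H_I`. -/
theorem stmt15 (q n e : ℕ) (hq : 2 ≤ q) (hn : 1 ≤ n)
    (C : Set (Fin n → ZMod q)) (hC : IsPerfectCode e C)
    (I : Finset (Fin n))
    (fC : (Fin n → ZMod q) → (Fin n → ZMod q))
    (hfC : ∀ x : Fin n → ZMod q, fC x ∈ C ∧ maxDist x (fC x) ≤ e) :
    ((fun x : Fin n → ZMod q => (fun i => if i ∈ I then 0 else x i)) ∘ fC) ''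
        {x : Fin n → ZMod q | ∀ i ∈ I, x i = 0} ⊆
      {x : Fin n → ZMod q | ∀ i ∈ I, x i = 0} ∧
    ∀ h ∈ {x : Fin n → ZMod q | ∀ i ∈ I, x i = 0},
      ∃! c, c ∈ ((fun x : Fin n → ZMod q => (fun i => if i ∈ I then 0 else x i)) ∘ fC) ''
          {x : Fin n → ZMod q | ∀ i ∈ I, x i = 0} ∧
        maxDist h c ≤ e := by
  have : NeZero q := ⟨by omega⟩
  constructor
  · rintro x ⟨y, hy, rfl⟩ i hi
    simp [hi]
  · intro h hh
    refine ⟨(fun i => if i ∈ I then 0 else fC h i), ⟨⟨h, hh, rfl⟩, ?_⟩, ?_⟩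
    · refine Finset.sup_le fun i _ => ?_
      by_cases hi : i ∈ I
      · simp [leeDist, hi, hh i hi]
      · simp only [hi, if_false]
        exact le_trans (Finset.le_sup (f := fun j => leeDist (h j) (fC h j)) (Finset.mem_univ i)) (hfC h).2
    · rintro c' ⟨⟨h', hh', rfl⟩, hd⟩
      have key : maxDist h (fC h') ≤ e := by
        refine Finset.sup_le fun i _ => ?_
        by_cases hi : i ∈ I
        · rw [hh i hi, ← hh' i hi]
          exact le_trans (Finset.le_sup (f := fun j => leeDist (h' j) (fC h' j)) (Finset.mem_univ i)) (hfC h').2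
        · have heq : leeDist (h i) (fC h' i)
              = leeDist (h i) (if i ∈ I then 0 else fC h' i) := by simp [hi]
          rw [heq]
          exact le_trans (Finset.le_sup (f := fun j => leeDist (h j) (if j ∈ I then 0 else fC h' j)) (Finset.mem_univ i)) hd
      obtain ⟨c, _, hu⟩ := hC h
      have e1 : fC h' = c := hu _ ⟨(hfC h').1, key⟩
      have e2 : fC h = c := hu _ ⟨(hfC h).1, (hfC h).2⟩
      simp only [Function.comp_apply, e1, e2]
end

section
/- Let n ≥ 1 and q = (2e+1)·t with integers e ≥ 0 and t ≥ 1. The following are equivalent: (i) for every upper triangular matrix M ∈ M_n(ℤ) with all diagonal entries equal to 2e+1, there exist an upper triangular matrix A ∈ M_n(ℤ) with all diagonal entries equal to t and an upper triangular matrix B ∈ M_n(ℤ) with all diagonal entries equal to 1 such that A·M = q·B; (ii) (2e+1)^{n−1} divides t. -/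
lemma tri_det {n : ℕ} (N : Matrix (Fin n) (Fin n) ℤ)
    (h : ∀ i j : Fin n, j < i → N i j = 0) : N.det = ∏ i, N i i :=
  Matrix.det_of_upperTriangular (fun i j hij => h i j hij)


/-- `(e,q)` with `q = (2e+1)·t` is `n`-maximal (every upper triangular integer
matrix with diagonal `2e+1` is an `(e,q)`-perfect matrix) iff `(2e+1)^{n-1} ∣ t`. -/
theorem stmt16 (n e t : ℕ) (hn : 1 ≤ n) (ht : 1 ≤ t) :
    (∀ M : Matrix (Fin n) (Fin n) ℤ,
      (∀ i j : Fin n, j < i → M i j = 0) → (∀ i : Fin n, M i i = (2 * e + 1 : ℤ)) →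
      ∃ A B : Matrix (Fin n) (Fin n) ℤ,
        (∀ i j : Fin n, j < i → A i j = 0) ∧ (∀ i : Fin n, A i i = (t : ℤ)) ∧
        (∀ i j : Fin n, j < i → B i j = 0) ∧ (∀ i : Fin n, B i i = 1) ∧
        A * M = (((2 * e + 1) * t : ℕ) : ℤ) • B) ↔
    (2 * e + 1) ^ (n - 1) ∣ t := by
  set m : ℤ := 2 * (e : ℤ) + 1 with hm
  constructor
  · intro H
    -- use M with diagonal m and superdiagonal 1
    set M : Matrix (Fin n) (Fin n) ℤ :=
      Matrix.of fun i j => (if i = j then m else 0) + (if (i : ℕ) + 1 = (j : ℕ) then 1 else 0)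
        with hMdef
    have hM0 : ∀ i j : Fin n, j < i → M i j = 0 := by
      intro i j hij
      simp only [hMdef, Matrix.of_apply]
      rw [if_neg, if_neg]
      · ring
      · omega
      · exact fun h => absurd h (Fin.ne_of_gt hij)
    have hMd : ∀ i : Fin n, M i i = m := by
      intro i; simp [hMdef]
    obtain ⟨A, B, hA0, hAd, hB0, hBd, hAB⟩ := H M hM0 hMd
    set z0 : Fin n := ⟨0, hn⟩ with hz0
    -- key recursion
    have key : ∀ j : ℕ, ∀ hj : j < n, ∃ u : ℤ,
        (t : ℤ) = m * t * u + (-1) ^ j * m ^ j * A z0 ⟨j, hj⟩ := by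
      intro j
      induction j with
      | zero =>
        intro hj
        refine ⟨0, ?_⟩
        have : (⟨0, hj⟩ : Fin n) = z0 := rfl
        rw [this, hAd z0]; ring
      | succ j ih =>
        intro hj
        have hjn : j < n := by omega
        obtain ⟨u, hu⟩ := ih hjn
        -- equation at entry (z0, ⟨j+1, hj⟩)
        have heq := congrFun (congrFun hAB z0) ⟨j + 1, hj⟩
        rw [Matrix.mul_apply] at heq
        have hsum : ∑ k : Fin n, A z0 k * M k ⟨j + 1, hj⟩ =
            A z0 ⟨j + 1, hj⟩ * m + A z0 ⟨j, hjn⟩ := by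
          have : ∀ k : Fin n, A z0 k * M k ⟨j + 1, hj⟩ =
              (if k = ⟨j + 1, hj⟩ then A z0 k * m else 0) +
              (if k = ⟨j, hjn⟩ then A z0 k else 0) := by
            intro k
            simp only [hMdef, Matrix.of_apply, Fin.ext_iff, Fin.val_mk]
            split_ifs <;> first | ring1 | (exfalso; omega)
          rw [Finset.sum_congr rfl (fun k _ => this k), Finset.sum_add_distrib,
            Finset.sum_ite_eq' Finset.univ, Finset.sum_ite_eq' Finset.univ]
          simp
        rw [hsum] at heq
        simp only [Matrix.smul_apply, smul_eq_mul] at heq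
        refine ⟨u + (-1) ^ j * m ^ j * B z0 ⟨j + 1, hj⟩, ?_⟩
        have hq : (((2 * e + 1) * t : ℕ) : ℤ) = m * t := by push_cast [hm]; ring
        rw [hq] at heq
        -- from heq : A z0 ⟨j+1⟩ * m + A z0 ⟨j⟩ = m * t * B ...
        linear_combination hu + ((-1) ^ j * m ^ j) * heq
    obtain ⟨u, hu⟩ := key (n - 1) (by omega)
    have hdvd : m ^ (n - 1) ∣ (t : ℤ) * (1 - m * u) := by
      refine ⟨(-1) ^ (n - 1) * A z0 ⟨n - 1, by omega⟩, ?_⟩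
      rw [mul_comm] at hu ⊢
      linear_combination hu
    have hcop : IsCoprime (m ^ (n - 1)) (1 - m * u) :=
      IsCoprime.pow_left ⟨u, 1, by ring⟩
    have := hcop.dvd_of_dvd_mul_right hdvd
    rw [hm] at this
    have hcast : ((((2 * e + 1) ^ (n - 1) : ℕ)) : ℤ) ∣ (t : ℤ) := by
      push_cast
      exact this
    exact_mod_cast hcast
  · intro hdvd M hM0 hMd
    obtain ⟨d, rfl⟩ : ∃ d, n = d + 1 := ⟨n - 1, by omega⟩
    simp only [Nat.add_sub_cancel] at hdvd ⊢
    obtain ⟨s, hs⟩ := hdvd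
    refine ⟨(s : ℤ) • M.adjugate, 1, ?_, ?_, ?_, ?_, ?_⟩
    · intro i j hij
      have : M.adjugate i j = 0 := by
        rw [Matrix.adjugate_apply]
        set N := M.updateRow j (Pi.single i 1) with hN
        have hNtri : ∀ a b : Fin (d + 1), b < a → N a b = 0 := by
          intro a b hba
          rw [hN, Matrix.updateRow_apply]
          by_cases haj : a = j
          · rw [if_pos haj]
            exact Pi.single_eq_of_ne (by subst haj; exact Fin.ne_of_lt (hba.trans hij)) 1
          · rw [if_neg haj]; exact hM0 a b hba
        rw [tri_det N hNtri]
        refine Finset.prod_eq_zero (Finset.mem_univ j) ?_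
        rw [hN, Matrix.updateRow_self]
        exact Pi.single_eq_of_ne (Fin.ne_of_lt hij) 1
      simp [this]
    · intro i
      have : M.adjugate i i = m ^ d := by
        rw [Matrix.adjugate_apply]
        set N := M.updateRow i (Pi.single i 1) with hN
        have hNtri : ∀ a b : Fin (d + 1), b < a → N a b = 0 := by
          intro a b hba
          rw [hN, Matrix.updateRow_apply]
          by_cases hai : a = i
          · rw [if_pos hai]
            exact Pi.single_eq_of_ne (by subst hai; exact Fin.ne_of_lt hba) 1
          · rw [if_neg hai]; exact hM0 a b hba
        rw [tri_det N hNtri]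
        have hdiag : ∀ k : Fin (d + 1), N k k = if k = i then 1 else m := by
          intro k
          rw [hN, Matrix.updateRow_apply]
          by_cases hk : k = i
          · subst hk; simp
          · rw [if_neg hk, if_neg hk]; exact hMd k
        calc ∏ k, N k k = ∏ k, (if k = i then 1 else m) :=
              Finset.prod_congr rfl (fun k _ => hdiag k)
          _ = (∏ k ∈ Finset.univ.erase i, (if k = i then 1 else m)) *
                (if i = i then 1 else m) := (Finset.prod_erase_mul _ _ (Finset.mem_univ i)).symm
          _ = m ^ d := by
              rw [if_pos rfl, mul_one]
              rw [Finset.prod_congr rfl (fun k hk =>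
                if_neg (Finset.ne_of_mem_erase hk))]
              rw [Finset.prod_const, Finset.card_erase_of_mem (Finset.mem_univ i)]
              simp
      rw [Matrix.smul_apply, this, smul_eq_mul]
      rw [hs]; push_cast [hm, Nat.add_sub_cancel]; ring
    · intro i j hij; simp [Matrix.one_apply_ne (Fin.ne_of_gt hij)]
    · intro i; simp
    · have hdet : M.det = m ^ (d + 1) := by
        rw [tri_det M hM0, Finset.prod_congr rfl (fun k _ => hMd k), Finset.prod_const]
        simp
      rw [Matrix.smul_mul, Matrix.adjugate_mul, hdet, smul_smul]
      congr 1
      rw [hs]; push_cast [hm]; ring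
end
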